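/- arXiv:2401.10012 — 2 statements merged into one kernel-verified Lean document; each statement's English description precedes it below -/
import Mathlib

section
/- Let G ↷ X and G ↷ Y be actions of a countably infinite group and k ∈ ℕ. Then: (1) IT_k(X,G) is a closed subset of X^k invariant under the diagonal product action of G; (2) if π: G↷X → G↷Y is a factor map, then (π×⋯×π)(IT_k(X,G)) = IT_k(Y,G). -/
open Filter Set MeasureTheory Pointwise

section LocalEntropyDefs

variable {G X : Type*}

/-- `J ⊆ G` is an independence set for the tuple of sets `A` with respect to the action `a`. -/
def IndepSetOn {k : ℕ} (a : G → X → X) (A : Fin k → Set X) (J : Set G) : Prop :=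
  ∀ I : Finset G, ↑I ⊆ J → I.Nonempty → ∀ φ : G → Fin k,
    (⋂ s ∈ I, a s ⁻¹' A (φ s)).Nonempty

/-- The tuple of sets `A` has positive independence density with respect to the action `a`. -/
def PosIndepDensity {k : ℕ} (a : G → X → X) (A : Fin k → Set X) : Prop :=
  ∃ q : ℝ, 0 < q ∧ ∀ F : Finset G, F.Nonempty →
    ∃ J : Finset G, J ⊆ F ∧ q * (F.card : ℝ) ≤ (J.card : ℝ) ∧ IndepSetOn a A ↑J

/-- IE-tuples (independence entropy tuples). -/
def IsIETuple [TopologicalSpace X] {k : ℕ} (a : G → X → X) (x : Fin k → X) : Prop :=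
  ∀ U : Fin k → Set X, (∀ i, IsOpen (U i)) → (∀ i, x i ∈ U i) → PosIndepDensity a U

/-- IN-tuples. -/
def IsINTuple [TopologicalSpace X] {k : ℕ} (a : G → X → X) (x : Fin k → X) : Prop :=
  ∀ U : Fin k → Set X, (∀ i, IsOpen (U i)) → (∀ i, x i ∈ U i) →
    ∀ n : ℕ, ∃ J : Finset G, n ≤ J.card ∧ IndepSetOn a U ↑J

/-- IT-tuples. -/
def IsITTuple [TopologicalSpace X] {k : ℕ} (a : G → X → X) (x : Fin k → X) : Prop :=
  ∀ U : Fin k → Set X, (∀ i, IsOpen (U i)) → (∀ i, x i ∈ U i) →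
    ∃ J : Set G, J.Infinite ∧ IndepSetOn a U J

/-- A finite open cover of the space. -/
def IsFinOpenCover [TopologicalSpace X] (𝒰 : Set (Set X)) : Prop :=
  𝒰.Finite ∧ (∀ U ∈ 𝒰, IsOpen U) ∧ ⋃₀ 𝒰 = Set.univ

/-- Minimal cardinality of a subcover of the join `⋁_{g ∈ F} g⁻¹𝒰`. -/
noncomputable def coverNJoin (a : G → X → X) (F : Finset G) (𝒰 : Set (Set X)) : ℕ :=
  sInf {m | ∃ s : Finset (G → Set X), (∀ f ∈ s, ∀ g ∈ F, f g ∈ 𝒰) ∧ s.card ≤ m ∧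
    (⋃ f ∈ s, ⋂ g ∈ F, a g ⁻¹' f g) = Set.univ}

/-- Følner sequence. -/
def IsFolner (G : Type*) [Group G] (Fs : ℕ → Finset G) : Prop :=
  (∀ n, (Fs n).Nonempty) ∧ ∀ K : Finset G, ∀ δ : ℝ, 0 < δ →
    ∀ᶠ n in Filter.atTop,
      ((symmDiff ((K : Set G) * (Fs n : Set G)) ((Fs n : Set G))).ncard : ℝ)
        ≤ δ * ((Fs n).card : ℝ)

/-- Entropy of a cover along a Følner sequence. -/
noncomputable def coverEntropyFolner (a : G → X → X) (Fs : ℕ → Finset G)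
    (𝒰 : Set (Set X)) : ℝ :=
  Filter.atTop.limsup fun n => Real.log (coverNJoin a (Fs n) 𝒰) / ((Fs n).card : ℝ)

/-- Topological entropy of the action. -/
noncomputable def topEntropyFolner [TopologicalSpace X] (a : G → X → X)
    (Fs : ℕ → Finset G) : ENNReal :=
  ⨆ 𝒰 : {𝒰 : Set (Set X) // IsFinOpenCover 𝒰}, ENNReal.ofReal (coverEntropyFolner a Fs 𝒰.1)

/-- Naive entropy of the action with respect to a cover. -/
noncomputable def naiveEntropyCover (a : G → X → X) (𝒰 : Set (Set X)) : ℝ :=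
  ⨅ F : {F : Finset G // F.Nonempty}, Real.log (coverNJoin a F.1 𝒰) / ((F.1.card : ℝ))

/-- Naive topological entropy. -/
noncomputable def naiveEntropy [TopologicalSpace X] (a : G → X → X) : ENNReal :=
  ⨆ 𝒰 : {𝒰 : Set (Set X) // IsFinOpenCover 𝒰}, ENNReal.ofReal (naiveEntropyCover a 𝒰.1)

/-- Minimal cardinality of a subcover of `⋁_{i=1}^n (S i)⁻¹𝒰`. -/
noncomputable def coverNSeq (a : G → X → X) (S : ℕ → G) (n : ℕ) (𝒰 : Set (Set X)) : ℕ :=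
  sInf {m | ∃ s : Finset (ℕ → Set X), (∀ f ∈ s, ∀ i ∈ Finset.range n, f i ∈ 𝒰) ∧ s.card ≤ m ∧
    (⋃ f ∈ s, ⋂ i ∈ Finset.range n, a (S i) ⁻¹' f i) = Set.univ}

/-- Sequence entropy along `S` with respect to a cover. -/
noncomputable def seqEntropyCover (a : G → X → X) (S : ℕ → G) (𝒰 : Set (Set X)) : ℝ :=
  Filter.atTop.limsup fun n => Real.log (coverNSeq a S n 𝒰) / (n : ℝ)

/-- Supremum of sequence entropies `h*`. -/
noncomputable def seqEntropySup [TopologicalSpace X] (a : G → X → X) : ENNReal :=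
  ⨆ 𝒰 : {𝒰 : Set (Set X) // IsFinOpenCover 𝒰}, ⨆ S : ℕ → G,
    ENNReal.ofReal (seqEntropyCover a S 𝒰.1)

/-- Entropy tuple. -/
def IsEntropyTuple [TopologicalSpace X] {k : ℕ} (a : G → X → X) (Fs : ℕ → Finset G)
    (x : Fin k → X) : Prop :=
  ∀ l : ℕ, 2 ≤ l → ∀ K : Fin l → Set X, (∀ j, IsClosed (K j)) →
    (∀ j, ∃ i, K j ∈ nhds (x i)) →
    (∀ j j', j ≠ j' → Disjoint (K j) (K j')) →
    0 < coverEntropyFolner a Fs (Set.range fun j => (K j)ᶜ)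

/-- Sequence entropy tuple. -/
def IsSeqEntropyTuple [TopologicalSpace X] {k : ℕ} (a : G → X → X) (x : Fin k → X) : Prop :=
  ∀ l : ℕ, 2 ≤ l → ∀ K : Fin l → Set X, (∀ j, IsClosed (K j)) →
    (∀ j, ∃ i, K j ∈ nhds (x i)) →
    (∀ j j', j ≠ j' → Disjoint (K j) (K j')) →
    ∃ S : ℕ → G, 0 < seqEntropyCover a S (Set.range fun j => (K j)ᶜ)

/-- Tameness: the Ellis semigroup has cardinality at most continuum. -/
def IsTameAction [TopologicalSpace X] (a : G → X → X) : Prop :=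
  Cardinal.mk (closure (Set.range a) : Set (X → X)) ≤ Cardinal.continuum

end LocalEntropyDefs

section ITAux

open Classical

variable {G X : Type*} {k : ℕ}

theorem ITaux_indepSetOn_mono_sets {a : G → X → X} {A B : Fin k → Set X} {J : Set G}
    (h : ∀ i, A i ⊆ B i) (hJ : IndepSetOn a A J) : IndepSetOn a B J := by
  intro I hI hne φ
  obtain ⟨x, hx⟩ := hJ I hI hne φ
  simp only [Set.mem_iInter] at hx
  exact ⟨x, Set.mem_iInter₂.2 fun s hs => h _ (hx s hs)⟩

theorem ITaux_indepSetOn_mono_left {a : G → X → X} {A : Fin k → Set X} {J J' : Set G}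
    (h : J' ⊆ J) (hJ : IndepSetOn a A J) : IndepSetOn a A J' :=
  fun I hI hne φ => hJ I (fun s hs => h (hI hs)) hne φ

/-- The set chosen at position `s`: if `φ s = i0` we take `C` or `D` according to `ψ s`,
otherwise `A (φ s)`. -/
noncomputable def pickCD {G X : Type*} {k : ℕ} (A : Fin k → Set X) (i0 : Fin k) (C D : Set X)
    (φ : G → Fin k) (ψ : G → Bool) (s : G) : Set X :=
  if φ s = i0 then (if ψ s = true then C else D) else A (φ s)

def GoodCD (a : G → X → X) (A : Fin k → Set X) (i0 : Fin k) (C D : Set X)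
    (I : Finset G) (φ : G → Fin k) (ψ : G → Bool) : Prop :=
  (⋂ s ∈ I, a s ⁻¹' pickCD A i0 C D φ ψ s).Nonempty

theorem goodCD_mono {a : G → X → X} {A : Fin k → Set X} {i0 : Fin k} {C D : Set X}
    {I I' : Finset G} {φ : G → Fin k} {ψ : G → Bool}
    (h : GoodCD a A i0 C D I φ ψ) (hsub : I' ⊆ I) : GoodCD a A i0 C D I' φ ψ := by
  obtain ⟨x, hx⟩ := h
  simp only [Set.mem_iInter] at hx
  exact ⟨x, Set.mem_iInter₂.2 fun s hs => hx s (hsub hs)⟩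

theorem goodCD_congr {a : G → X → X} {A : Fin k → Set X} {i0 : Fin k} {C D : Set X}
    {I : Finset G} {φ φ' : G → Fin k} {ψ ψ' : G → Bool}
    (hφ : ∀ s ∈ I, φ' s = φ s) (hψ : ∀ s ∈ I, ψ' s = ψ s)
    (h : GoodCD a A i0 C D I φ ψ) : GoodCD a A i0 C D I φ' ψ' := by
  obtain ⟨x, hx⟩ := h
  simp only [Set.mem_iInter] at hx
  refine ⟨x, Set.mem_iInter₂.2 fun s hs => ?_⟩
  have hmem := hx s hs
  simp only [Set.mem_preimage, pickCD] at hmem ⊢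
  rw [hφ s hs, hψ s hs]
  exact hmem

/-- The key invariant: relative to the already-chosen finite set `U` (on which `ψ` is
forced to be `true`, i.e. side `C`), every finite extension into `M` admits a good `ψ`. -/
def PPred (a : G → X → X) (A : Fin k → Set X) (i0 : Fin k) (C D : Set X)
    (U : Finset G) (M : Set G) : Prop :=
  ∀ S : Finset G, ↑S ⊆ M → ∀ φ : G → Fin k, ∃ ψ : G → Bool,
    GoodCD a A i0 C D (U ∪ S) φ ψ ∧ ∀ s ∈ U, φ s = i0 → ψ s = true

theorem ITaux_PPred_base [Nonempty X] {a : G → X → X} {A : Fin k → Set X} {i0 : Fin k}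
    {C D : Set X} (hCD : A i0 ⊆ C ∪ D) {J : Set G} (hJ : IndepSetOn a A J) :
    PPred a A i0 C D ∅ J := by
  intro S hS φ
  rcases S.eq_empty_or_nonempty with rfl | hSne
  · refine ⟨fun _ => true, ⟨Classical.arbitrary X, ?_⟩, by simp⟩
    simp
  · obtain ⟨x, hx⟩ := hJ S hS hSne φ
    simp only [Set.mem_iInter] at hx
    refine ⟨fun s => decide (a s x ∈ C), ⟨x, Set.mem_iInter₂.2 fun s hs => ?_⟩, by simp⟩
    have hs' : s ∈ S := by simpa using hs
    have hmem := hx s hs'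
    simp only [Set.mem_preimage, pickCD] at hmem ⊢
    by_cases h1 : φ s = i0
    · rw [if_pos h1]
      rw [h1] at hmem
      by_cases hC : a s x ∈ C
      · simp [hC]
      · have hD : a s x ∈ D := (hCD hmem).resolve_left hC
        simp [hC, hD]
    · rw [if_neg h1]
      exact hmem


theorem ITaux_binary_split [Nonempty X] (a : G → X → X) (A : Fin k → Set X) (i0 : Fin k)
    (C D : Set X) (hCD : A i0 ⊆ C ∪ D) {J : Set G} (hJinf : J.Infinite)
    (hJ : IndepSetOn a A J) :
    ∃ J', J' ⊆ J ∧ J'.Infinite ∧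
      (IndepSetOn a (Function.update A i0 C) J' ∨
        IndepSetOn a (Function.update A i0 D) J') := by
  classical
  have hP0 : PPred a A i0 C D ∅ J := ITaux_PPred_base hCD hJ
  by_cases hstuck : ∃ U : Finset G, ∃ M : Set G,
      (↑U ⊆ J ∧ M ⊆ J ∧ M.Infinite ∧ (∀ u ∈ U, u ∉ M) ∧ PPred a A i0 C D U M) ∧
      ¬ (∃ u ∈ M, ∃ M' : Set G, M' ⊆ M \ {u} ∧ M'.Infinite ∧ PPred a A i0 C D (insert u U) M')
  · -- stuck case: side D along an infinite subset of M
    obtain ⟨U, M, ⟨hUJ, hMJ, hMinf, hUM, hPP⟩, hnotExt⟩ := hstuck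
    -- extraction of forcing contexts
    have hext : ∀ (u : G) (T : Finset G), ∃ (S : Finset G) (φ : G → Fin k),
        u ∈ M → (↑S ⊆ M ∧ (∀ s ∈ S, s ∉ T ∧ s ≠ u) ∧ φ u = i0 ∧
          ∀ ψ : G → Bool, GoodCD a A i0 C D (insert u U ∪ S) φ ψ →
            (∀ s ∈ U, φ s = i0 → ψ s = true) → ψ u = false) := by
      intro u T
      by_cases hu : u ∈ M
      swap
      · exact ⟨∅, fun _ => i0, fun h => absurd h hu⟩
      have hM'inf : (M \ (↑T ∪ {u})).Infinite :=
        hMinf.diff ((T.finite_toSet).union (Set.finite_singleton u))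
      have hM'sub : (M \ (↑T ∪ {u})) ⊆ M \ {u} :=
        fun s hs => ⟨hs.1, fun h => hs.2 (Or.inr h)⟩
      have hnP : ¬ PPred a A i0 C D (insert u U) (M \ (↑T ∪ {u})) :=
        fun hp => hnotExt ⟨u, hu, _, hM'sub, hM'inf, hp⟩
      unfold PPred at hnP
      push_neg at hnP
      obtain ⟨S, hSsub, φ, hφ⟩ := hnP
      have hScon : ∀ s ∈ S, s ∈ M ∧ s ∉ T ∧ s ≠ u := by
        intro s hs
        have := hSsub hs
        exact ⟨this.1, fun h => this.2 (Or.inl h), fun h => this.2 (Or.inr h)⟩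
      have key : ∀ ψ : G → Bool, GoodCD a A i0 C D (insert u U ∪ S) φ ψ →
          ∃ s ∈ insert u U, φ s = i0 ∧ ¬ ψ s = true := by
        intro ψ hg
        obtain ⟨s, hs1, hs2, hs3⟩ := hφ ψ hg
        exact ⟨s, hs1, hs2, hs3⟩
      have hφu : φ u = i0 := by
        by_contra hne
        obtain ⟨ψ₀, hg, hU⟩ := hPP (insert u S) (by
          intro s hs
          simp only [Finset.coe_insert, Set.mem_insert_iff] at hs
          rcases hs with rfl | hsS
          · exact hu
          · exact (hScon s hsS).1) φ
        have hg' : GoodCD a A i0 C D (insert u U ∪ S) φ ψ₀ := by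
          have he : insert u U ∪ S = U ∪ insert u S := by
            ext t
            simp only [Finset.mem_union, Finset.mem_insert]
            tauto
          rwa [he]
        obtain ⟨s, hsmem, hsi0, hsψ⟩ := key ψ₀ hg'
        rcases Finset.mem_insert.mp hsmem with rfl | hsU
        · exact hne hsi0
        · exact hsψ (hU s hsU hsi0)
      refine ⟨S, φ, fun _ => ⟨fun s hs => (hScon s (by simpa using hs)).1,
        fun s hs => ⟨(hScon s hs).2.1, (hScon s hs).2.2⟩, hφu, ?_⟩⟩
      intro ψ hg hUt
      obtain ⟨s, hsmem, hsi0, hsψ⟩ := key ψ hg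
      rcases Finset.mem_insert.mp hsmem with rfl | hsU
      · simpa using hsψ
      · exact absurd (hUt s hsU hsi0) hsψ
    choose Sf φf hSf using hext
    have hpick : ∀ T : Finset G, ∃ u, u ∈ M ∧ u ∉ T := by
      intro T
      obtain ⟨u, hu⟩ := (hMinf.diff T.finite_toSet).nonempty
      exact ⟨u, hu.1, fun h => hu.2 (by simpa using h)⟩
    choose uF huF1 huF2 using hpick
    set Tseq : ℕ → Finset G := fun n =>
      Nat.rec ∅ (fun _ Tn => Tn ∪ insert (uF Tn) (Sf (uF Tn) Tn)) n with hTseq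
    set v : ℕ → G := fun n => uF (Tseq n) with hv
    set Sm : ℕ → Finset G := fun n => Sf (v n) (Tseq n) with hSm
    set φm : ℕ → G → Fin k := fun n => φf (v n) (Tseq n) with hφm
    have hTsucc : ∀ n, Tseq (n + 1) = Tseq n ∪ insert (v n) (Sm n) := fun n => rfl
    have hvM : ∀ n, v n ∈ M := fun n => huF1 _
    have hvT : ∀ n, v n ∉ Tseq n := fun n => huF2 _
    have hspec : ∀ n, ↑(Sm n) ⊆ M ∧ (∀ s ∈ Sm n, s ∉ Tseq n ∧ s ≠ v n) ∧
        φm n (v n) = i0 ∧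
        ∀ ψ : G → Bool, GoodCD a A i0 C D (insert (v n) U ∪ Sm n) (φm n) ψ →
          (∀ s ∈ U, φm n s = i0 → ψ s = true) → ψ (v n) = false :=
      fun n => hSf (v n) (Tseq n) (hvM n)
    have hTmono : ∀ n m, n ≤ m → Tseq n ⊆ Tseq m := by
      intro n m h
      induction m with
      | zero =>
        have : n = 0 := Nat.le_zero.mp h
        subst this; exact Finset.Subset.refl _
      | succ m ih =>
        rcases Nat.lt_or_ge n (m + 1) with hlt | hge
        · exact (ih (Nat.lt_succ_iff.mp hlt)).trans
            (by rw [hTsucc]; exact Finset.subset_union_left)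
        · have : n = m + 1 := le_antisymm h hge
          subst this; exact Finset.Subset.refl _
    have hin : ∀ n, insert (v n) (Sm n) ⊆ Tseq (n + 1) := by
      intro n; rw [hTsucc]; exact Finset.subset_union_right
    have hvT' : ∀ i j, i < j → v i ∈ Tseq j := fun i j h =>
      hTmono _ _ h (hin i (Finset.mem_insert_self _ _))
    have hSmT : ∀ i j, i < j → Sm i ⊆ Tseq j := fun i j h s hs =>
      hTmono _ _ h (hin i (Finset.mem_insert_of_mem hs))
    have hvinj : Function.Injective v := by
      intro i j hij
      by_contra hne
      rcases Nat.lt_or_ge i j with h | h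
      · exact hvT j (hij ▸ hvT' i j h)
      · have hji : j < i := lt_of_le_of_ne h fun e => hne e.symm
        exact hvT i (hij ▸ hvT' j i hji)
    have hvS : ∀ i j, v i ∉ Sm j := by
      intro i j hmem
      rcases lt_trichotomy i j with h | rfl | h
      · exact ((hspec j).2.1 _ hmem).1 (hvT' i j h)
      · exact ((hspec i).2.1 _ hmem).2 rfl
      · exact hvT i (hSmT j i h hmem)
    have hSdisj : ∀ i j, i ≠ j → ∀ s ∈ Sm i, s ∉ Sm j := by
      intro i j hne s hsi hsj
      rcases Nat.lt_or_ge i j with h | h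
      · exact ((hspec j).2.1 _ hsj).1 (hSmT i j h hsi)
      · have hji : j < i := lt_of_le_of_ne h fun e => hne e.symm
        exact ((hspec i).2.1 _ hsi).1 (hSmT j i hji hsj)
    -- pigeonhole on the restriction of φm to U
    obtain ⟨χ, hχ⟩ := Finite.exists_infinite_fiber
      (fun n : ℕ => fun s : {x // x ∈ U} => φm n s.1)
    have hRinf : ((fun n : ℕ => fun s : {x // x ∈ U} => φm n s.1) ⁻¹' {χ}).Infinite :=
      Set.infinite_coe_iff.mp hχ
    set R : Set ℕ := (fun n : ℕ => fun s : {x // x ∈ U} => φm n s.1) ⁻¹' {χ} with hR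
    have hRagree : ∀ m ∈ R, ∀ m' ∈ R, ∀ s, (hs : s ∈ U) → φm m s = φm m' s := by
      intro m hm m' hm' s hs
      have h1 : (fun s : {x // x ∈ U} => φm m s.1) = χ := hm
      have h2 : (fun s : {x // x ∈ U} => φm m' s.1) = χ := hm'
      have e1 := congrFun h1 ⟨s, hs⟩
      have e2 := congrFun h2 ⟨s, hs⟩
      simp only at e1 e2
      rw [e1, e2]
    refine ⟨v '' R, ?_, hRinf.image hvinj.injOn, Or.inr ?_⟩
    · rintro s ⟨n, _, rfl⟩
      exact hMJ (hvM n)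
    intro I hIsub hIne φ'
    have hmemI : ∀ s : G, ∃ m, s ∈ I → (m ∈ R ∧ v m = s) := by
      intro s
      by_cases hs : s ∈ I
      · obtain ⟨m, hm, hvm⟩ := hIsub (Finset.mem_coe.mpr hs)
        exact ⟨m, fun _ => ⟨hm, hvm⟩⟩
      · exact ⟨0, fun h => absurd h hs⟩
    choose g hg using hmemI
    set needS : Finset ℕ := (I.filter (fun s => φ' s = i0)).image g with hneedS
    have hneedS_mem : ∀ m ∈ needS, m ∈ R ∧ φ' (v m) = i0 ∧ v m ∈ I := by
      intro m hm
      obtain ⟨s, hs, rfl⟩ := Finset.mem_image.mp hm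
      have hs1 : s ∈ I := (Finset.mem_filter.mp hs).1
      have hs2 : φ' s = i0 := (Finset.mem_filter.mp hs).2
      obtain ⟨hgR, hgv⟩ := hg s hs1
      rw [hgv]
      exact ⟨hgR, hs2, hs1⟩
    set Stot : Finset G := I ∪ needS.biUnion Sm with hStot
    have hIM : ∀ s ∈ I, s ∈ M := by
      intro s hs
      obtain ⟨m, _, rfl⟩ := hIsub (Finset.mem_coe.mpr hs)
      exact hvM m
    have hStotM : ↑Stot ⊆ M := by
      intro s hs
      simp only [hStot, Finset.coe_union, Set.mem_union, Finset.mem_coe,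
        Finset.mem_biUnion] at hs
      rcases hs with hs | ⟨m, hm, hsm⟩
      · exact hIM s hs
      · exact (hspec m).1 hsm
    set mstar : ℕ := if h : needS.Nonempty then h.choose else 0 with hmstar
    have hmstarR : needS.Nonempty → mstar ∈ R := by
      intro h
      rw [hmstar, dif_pos h]
      exact (hneedS_mem _ h.choose_spec).1
    set φhat : G → Fin k := fun s =>
      if h : ∃ m, m ∈ needS ∧ s ∈ Sm m then φm h.choose s
      else if s ∈ I then φ' s else φm mstar s with hφhat
    -- agreement facts
    have hA : ∀ s, s ∈ U → ∀ m ∈ needS, φhat s = φm m s := by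
      intro s hsU m hm
      have hsM : s ∉ M := hUM s hsU
      have hno : ¬ ∃ m, m ∈ needS ∧ s ∈ Sm m := by
        rintro ⟨m', _, hsm'⟩
        exact hsM ((hspec m').1 hsm')
      have hnI : s ∉ I := fun h => hsM (hIM s h)
      rw [hφhat]
      simp only [dif_neg hno, if_neg hnI]
      exact hRagree mstar (hmstarR ⟨m, hm⟩) m (hneedS_mem m hm).1 s hsU
    have hB : ∀ s ∈ I, φhat s = φ' s := by
      intro s hs
      have hno : ¬ ∃ m, m ∈ needS ∧ s ∈ Sm m := by
        rintro ⟨m', _, hsm'⟩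
        have := (hg s hs).2
        rw [← this] at hsm'
        exact hvS _ _ hsm'
      rw [hφhat]
      simp only [dif_neg hno, if_pos hs]
    have hC : ∀ m ∈ needS, ∀ s ∈ Sm m, φhat s = φm m s := by
      intro m hm s hsm
      have hex : ∃ m', m' ∈ needS ∧ s ∈ Sm m' := ⟨m, hm, hsm⟩
      rw [hφhat]
      simp only [dif_pos hex]
      have hcs := hex.choose_spec
      by_cases he : hex.choose = m
      · rw [he]
      · exact absurd hcs.2 (hSdisj m hex.choose (fun h => he h.symm) s hsm)
    obtain ⟨ψ, hGood, hUtrue⟩ := hPP Stot hStotM φhat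
    have hforce : ∀ m ∈ needS, ψ (v m) = false := by
      intro m hm
      obtain ⟨hmR, hmi0, hmI⟩ := hneedS_mem m hm
      apply (hspec m).2.2.2 ψ
      · have hsub : insert (v m) U ∪ Sm m ⊆ U ∪ Stot := by
          intro s hs
          rcases Finset.mem_union.mp hs with hs | hs
          · rcases Finset.mem_insert.mp hs with rfl | hs
            · exact Finset.mem_union_right _ (Finset.mem_union_left _ hmI)
            · exact Finset.mem_union_left _ hs
          · exact Finset.mem_union_right _
              (Finset.mem_union_right _ (Finset.mem_biUnion.mpr ⟨m, hm, hs⟩))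
        refine goodCD_congr ?_ (fun s _ => rfl) (goodCD_mono hGood hsub)
        intro s hs
        rcases Finset.mem_union.mp hs with hs | hs
        · rcases Finset.mem_insert.mp hs with rfl | hs
          · rw [hB _ hmI, hmi0, (hspec m).2.2.1]
          · rw [hA s hs m hm]
        · rw [hC m hm s hs]
      · intro s hsU hsi0
        exact hUtrue s hsU (by rw [hA s hsU m hm]; exact hsi0)
    have hIStot : I ⊆ U ∪ Stot :=
      Finset.Subset.trans Finset.subset_union_left Finset.subset_union_right
    obtain ⟨x, hx⟩ := goodCD_mono hGood hIStot
    refine ⟨x, Set.mem_iInter₂.2 fun s hs => ?_⟩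
    have hmem := Set.mem_iInter₂.1 hx s hs
    simp only [Set.mem_preimage, pickCD] at hmem ⊢
    rw [hB s hs] at hmem
    by_cases h1 : φ' s = i0
    · rw [if_pos h1] at hmem
      have hsg : g s ∈ needS :=
        Finset.mem_image_of_mem g (Finset.mem_filter.mpr ⟨hs, h1⟩)
      have hψ : ψ s = false := by
        have := hforce (g s) hsg
        rwa [(hg s hs).2] at this
      rw [hψ] at hmem
      simp only [Bool.false_eq_true, if_false] at hmem
      rw [h1, Function.update_self]
      exact hmem
    · rw [if_neg h1] at hmem
      rw [Function.update_of_ne h1]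
      exact hmem
  · -- non-stuck case: side C
    push_neg at hstuck
    have hstep : ∀ p : Finset G × Set G, ∃ q : Finset G × Set G,
        (↑p.1 ⊆ J ∧ p.2 ⊆ J ∧ p.2.Infinite ∧ (∀ u ∈ p.1, u ∉ p.2) ∧
          PPred a A i0 C D p.1 p.2) →
        ((↑q.1 ⊆ J ∧ q.2 ⊆ J ∧ q.2.Infinite ∧ (∀ u ∈ q.1, u ∉ q.2) ∧
          PPred a A i0 C D q.1 q.2) ∧ p.1 ⊆ q.1 ∧ q.1.card = p.1.card + 1) := by
      intro p
      by_cases hq : ↑p.1 ⊆ J ∧ p.2 ⊆ J ∧ p.2.Infinite ∧ (∀ u ∈ p.1, u ∉ p.2) ∧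
          PPred a A i0 C D p.1 p.2
      swap
      · exact ⟨p, fun h => absurd h hq⟩
      obtain ⟨hUJ, hMJ, hMinf, hUM, hPP⟩ := hq
      obtain ⟨u, hu, M', hM'sub, hM'inf, hPP'⟩ := hstuck p.1 p.2
        ⟨hUJ, hMJ, hMinf, hUM, hPP⟩
      refine ⟨(insert u p.1, M'), fun _ => ⟨⟨?_, ?_, hM'inf, ?_, hPP'⟩, ?_, ?_⟩⟩
      · intro s hs
        simp only [Finset.coe_insert, Set.mem_insert_iff] at hs
        rcases hs with rfl | hs
        · exact hMJ hu
        · exact hUJ hs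
      · exact fun s hs => hMJ (hM'sub hs).1
      · intro s hs hsM'
        rcases Finset.mem_insert.mp hs with rfl | hs
        · exact (hM'sub hsM').2 rfl
        · exact hUM s hs (hM'sub hsM').1
      · exact Finset.subset_insert _ _
      · exact Finset.card_insert_of_notMem (fun h => hUM u h hu)
    choose stepF hstepF using hstep
    set seq : ℕ → Finset G × Set G := fun n => stepF^[n] (∅, J) with hseq
    have hseqsucc : ∀ n, seq (n + 1) = stepF (seq n) := by
      intro n
      rw [hseq]
      exact Function.iterate_succ_apply' stepF n (∅, J)
    have h0 : seq 0 = (∅, J) := by rw [hseq]; rfl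
    have hseqQ : ∀ n, ↑(seq n).1 ⊆ J ∧ (seq n).2 ⊆ J ∧ (seq n).2.Infinite ∧
        (∀ u ∈ (seq n).1, u ∉ (seq n).2) ∧ PPred a A i0 C D (seq n).1 (seq n).2 := by
      intro n
      induction n with
      | zero => rw [h0]; exact ⟨by simp, subset_rfl, hJinf, by simp, hP0⟩
      | succ n ih =>
        rw [hseqsucc]
        exact (hstepF (seq n) ih).1
    have hcard : ∀ n, (seq n).1.card = n := by
      intro n
      induction n with
      | zero => rw [h0]; simp
      | succ n ih =>
        rw [hseqsucc, (hstepF (seq n) (hseqQ n)).2.2, ih]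
    have hmono : ∀ n m, n ≤ m → (seq n).1 ⊆ (seq m).1 := by
      intro n m h
      induction m with
      | zero =>
        have : n = 0 := Nat.le_zero.mp h
        subst this; exact Finset.Subset.refl _
      | succ m ih =>
        rcases Nat.lt_or_ge n (m + 1) with hlt | hge
        · refine (ih (Nat.lt_succ_iff.mp hlt)).trans ?_
          rw [hseqsucc]
          exact (hstepF (seq m) (hseqQ m)).2.1
        · have : n = m + 1 := le_antisymm h hge
          subst this; exact Finset.Subset.refl _
    refine ⟨⋃ n, ((seq n).1 : Set G), ?_, ?_, Or.inl ?_⟩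
    · intro s hs
      obtain ⟨n, hn⟩ := Set.mem_iUnion.mp hs
      exact (hseqQ n).1 hn
    · intro hfin
      have hsub : (seq (hfin.toFinset.card + 1)).1 ⊆ hfin.toFinset := by
        intro s hs
        rw [Set.Finite.mem_toFinset]
        exact Set.mem_iUnion.mpr ⟨_, hs⟩
      have := Finset.card_le_card hsub
      rw [hcard] at this
      omega
    intro I hIsub hIne φ
    have hlev : ∀ s : G, ∃ n, s ∈ I → s ∈ (seq n).1 := by
      intro s
      by_cases hs : s ∈ I
      · obtain ⟨n, hn⟩ := Set.mem_iUnion.mp (hIsub (Finset.mem_coe.mpr hs))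
        exact ⟨n, fun _ => hn⟩
      · exact ⟨0, fun h => absurd h hs⟩
    choose lv hlv using hlev
    have hIN : ∀ s ∈ I, s ∈ (seq (I.sup lv)).1 := fun s hs =>
      hmono (lv s) (I.sup lv) (Finset.le_sup hs) (hlv s hs)
    obtain ⟨ψ, hGood, hUtrue⟩ := (hseqQ (I.sup lv)).2.2.2.2 ∅ (by simp) φ
    rw [Finset.union_empty] at hGood
    obtain ⟨x, hx⟩ := goodCD_mono hGood (fun s hs => hIN s hs)
    refine ⟨x, Set.mem_iInter₂.2 fun s hs => ?_⟩
    have hmem := Set.mem_iInter₂.1 hx s hs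
    simp only [Set.mem_preimage, pickCD] at hmem ⊢
    by_cases h1 : φ s = i0
    · have hψ : ψ s = true := hUtrue s (hIN s hs) h1
      rw [if_pos h1, hψ, if_pos rfl] at hmem
      rw [h1, Function.update_self]
      exact hmem
    · rw [if_neg h1] at hmem
      rw [Function.update_of_ne h1]
      exact hmem


theorem ITaux_one_coord [Nonempty X] (a : G → X → X) (i0 : Fin k)
    (𝒞 : Finset (Set X)) :
    ∀ (A : Fin k → Set X) (J : Set G), A i0 ⊆ ⋃₀ ↑𝒞 → J.Infinite → IndepSetOn a A J →
    ∃ C ∈ 𝒞, ∃ J', J' ⊆ J ∧ J'.Infinite ∧ IndepSetOn a (Function.update A i0 C) J' := by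
  classical
  induction 𝒞 using Finset.induction with
  | empty =>
    intro A J hc hJinf hJ
    exfalso
    obtain ⟨s, hs⟩ := hJinf.nonempty
    obtain ⟨x, hx⟩ := hJ {s} (by simpa using hs) ⟨s, Finset.mem_singleton_self s⟩ (fun _ => i0)
    simp only [Finset.mem_singleton, Set.iInter_iInter_eq_left, Set.mem_preimage] at hx
    have := hc hx
    simp at this
  | @insert C 𝒞 hC ih =>
    intro A J hc hJinf hJ
    have hc' : A i0 ⊆ C ∪ ⋃₀ ↑𝒞 := by
      intro x hx
      have := hc hx
      simp only [Finset.coe_insert, Set.sUnion_insert] at this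
      exact this
    obtain ⟨J₁, hJ₁sub, hJ₁inf, hcase⟩ := ITaux_binary_split a A i0 C (⋃₀ ↑𝒞) hc' hJinf hJ
    rcases hcase with h | h
    · exact ⟨C, Finset.mem_insert_self _ _, J₁, hJ₁sub, hJ₁inf, h⟩
    · obtain ⟨C', hC', J₂, hJ₂sub, hJ₂inf, hind⟩ :=
        ih (Function.update A i0 (⋃₀ ↑𝒞)) J₁ (by rw [Function.update_self]) hJ₁inf h
      rw [Function.update_idem] at hind
      exact ⟨C', Finset.mem_insert_of_mem hC', J₂, hJ₂sub.trans hJ₁sub, hJ₂inf, hind⟩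

theorem ITaux_cover [Nonempty X] (a : G → X → X) (𝒞 : Fin k → Finset (Set X))
    (T : Finset (Fin k)) :
    ∀ (A : Fin k → Set X) (J : Set G), (∀ i ∈ T, A i ⊆ ⋃₀ ↑(𝒞 i)) → J.Infinite →
    IndepSetOn a A J →
    ∃ (B : Fin k → Set X) (J' : Set G), (∀ i ∈ T, B i ∈ 𝒞 i) ∧ (∀ i ∉ T, B i = A i) ∧
      J' ⊆ J ∧ J'.Infinite ∧ IndepSetOn a B J' := by
  classical
  induction T using Finset.induction with
  | empty =>
    intro A J _ hJinf hJ
    exact ⟨A, J, by simp, fun _ _ => rfl, subset_rfl, hJinf, hJ⟩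
  | @insert i T hiT ih =>
    intro A J hc hJinf hJ
    obtain ⟨B, J₁, hB1, hB2, hJ₁sub, hJ₁inf, hJ₁⟩ :=
      ih A J (fun j hj => hc j (Finset.mem_insert_of_mem hj)) hJinf hJ
    obtain ⟨C, hCmem, J₂, hJ₂sub, hJ₂inf, hJ₂⟩ :=
      ITaux_one_coord a i (𝒞 i) B J₁
        (by rw [hB2 i hiT]; exact hc i (Finset.mem_insert_self _ _)) hJ₁inf hJ₁
    refine ⟨Function.update B i C, J₂, ?_, ?_, hJ₂sub.trans hJ₁sub, hJ₂inf, hJ₂⟩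
    · intro j hj
      rcases Finset.mem_insert.mp hj with rfl | hj
      · rw [Function.update_self]; exact hCmem
      · have hji : j ≠ i := fun h => hiT (by rw [← h]; exact hj)
        rw [Function.update_of_ne hji]
        exact hB1 j hj
    · intro j hj
      have hji : j ≠ i := fun h => hj (h ▸ Finset.mem_insert_self _ _)
      rw [Function.update_of_ne hji]
      exact hB2 j (fun h => hj (Finset.mem_insert_of_mem h))


end ITAux


/-- Kerr–Li: the set of IT-tuples of length `k` is closed and invariant under the
product action, and products of factor maps send `IT_k(X,G)` onto `IT_k(Y,G)`. -/
theorem IT_tuples_properties {G X Y : Type*} [Group G] [Countable G] [Infinite G]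
    [TopologicalSpace X] [CompactSpace X] [TopologicalSpace.MetrizableSpace X] [Nonempty X]
    [MulAction G X] [ContinuousConstSMul G X]
    [TopologicalSpace Y] [CompactSpace Y] [TopologicalSpace.MetrizableSpace Y] [Nonempty Y]
    [MulAction G Y] [ContinuousConstSMul G Y] {k : ℕ} (hk : 1 ≤ k) :
    (IsClosed {x : Fin k → X | IsITTuple (fun (g : G) (y : X) => g • y) x} ∧
      ∀ (g : G) (x : Fin k → X), IsITTuple (fun (g : G) (y : X) => g • y) x →
        IsITTuple (fun (g : G) (y : X) => g • y) fun i => g • x i) ∧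
    (∀ π : X → Y, Continuous π → Function.Surjective π →
      (∀ (g : G) (x : X), π (g • x) = g • π x) →
      (fun x : Fin k → X => π ∘ x) '' {x | IsITTuple (fun (g : G) (y : X) => g • y) x} =
        {y : Fin k → Y | IsITTuple (fun (g : G) (w : Y) => g • w) y}) := by
  classical
  haveI : Nonempty (Fin k) := Fin.pos_iff_nonempty.mp hk
  constructor
  · constructor
    · -- closedness
      rw [← isOpen_compl_iff]
      rw [isOpen_iff_forall_mem_open]
      intro x hx
      simp only [Set.mem_compl_iff, Set.mem_setOf_eq] at hx
      unfold IsITTuple at hx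
      push_neg at hx
      obtain ⟨U, hUopen, hUmem, hbad⟩ := hx
      refine ⟨Set.pi Set.univ U, ?_,
        isOpen_set_pi Set.finite_univ (fun i _ => hUopen i), ?_⟩
      · intro x' hx'
        simp only [Set.mem_compl_iff, Set.mem_setOf_eq]
        intro hIT
        obtain ⟨J, hJinf, hJ⟩ := hIT U hUopen (fun i => hx' i (Set.mem_univ i))
        exact hbad J hJinf hJ
      · exact Set.mem_univ_pi.mpr hUmem
    · -- invariance
      intro g x hx U hUopen hUmem
      obtain ⟨J, hJinf, hJ⟩ := hx (fun i => (fun y : X => g • y) ⁻¹' U i)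
        (fun i => (hUopen i).preimage (continuous_const_smul g)) (fun i => hUmem i)
      refine ⟨(fun s => g * s) '' J, hJinf.image (mul_right_injective g).injOn, ?_⟩
      intro I hI hne φ
      have hsub : ↑(I.image fun t => g⁻¹ * t) ⊆ J := by
        intro s hs
        simp only [Finset.coe_image, Set.mem_image, Finset.mem_coe] at hs
        obtain ⟨t, ht, rfl⟩ := hs
        obtain ⟨j, hj, rfl⟩ := hI (Finset.mem_coe.mpr ht)
        rwa [inv_mul_cancel_left]
      obtain ⟨x₀, hx₀⟩ := hJ (I.image fun t => g⁻¹ * t) hsub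
        (hne.image _) (fun s => φ (g * s))
      refine ⟨x₀, Set.mem_iInter₂.2 fun t ht => ?_⟩
      have h1 : g⁻¹ * t ∈ I.image fun t => g⁻¹ * t := Finset.mem_image_of_mem _ ht
      have h2 := Set.mem_iInter₂.1 hx₀ _ h1
      simp only [Set.mem_preimage] at h2 ⊢
      rw [mul_inv_cancel_left] at h2
      rwa [← mul_smul, mul_inv_cancel_left] at h2
  · -- factor maps
    intro π hπc hπs hπe
    ext y
    simp only [Set.mem_image, Set.mem_setOf_eq]
    constructor
    · rintro ⟨x, hx, rfl⟩
      intro U hUopen hUmem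
      obtain ⟨J, hJinf, hJ⟩ := hx (fun i => π ⁻¹' U i)
        (fun i => (hUopen i).preimage hπc) (fun i => hUmem i)
      refine ⟨J, hJinf, fun I hI hne φ => ?_⟩
      obtain ⟨x₀, hx₀⟩ := hJ I hI hne φ
      refine ⟨π x₀, Set.mem_iInter₂.2 fun s hs => ?_⟩
      have hmem := Set.mem_iInter₂.1 hx₀ s hs
      simp only [Set.mem_preimage] at hmem ⊢
      rw [← hπe]
      exact hmem
    · intro hy
      letI : MetricSpace X := TopologicalSpace.metrizableSpaceMetric X
      letI : MetricSpace Y := TopologicalSpace.metrizableSpaceMetric Y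
      by_contra hcon
      push_neg at hcon
      -- the fibers product
      set K : Set (Fin k → X) := Set.pi Set.univ (fun i => π ⁻¹' {y i}) with hK
      have hKc : IsCompact K :=
        isCompact_univ_pi (fun i => (isClosed_singleton.preimage hπc).isCompact)
      have hKne : K.Nonempty := by
        have : ∀ i, ∃ x : X, π x = y i := fun i => hπs (y i)
        choose x0 hx0 using this
        exact ⟨x0, fun i _ => hx0 i⟩
      -- every fiber tuple has a bad ball-box
      have hbadball : ∀ x : Fin k → X, ∃ ε : ℝ, x ∈ K → (0 < ε ∧
          ∀ J : Set G, J.Infinite →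
            ¬ IndepSetOn (fun (g : G) (y : X) => g • y)
              (fun i => Metric.ball (x i) ε) J) := by
        intro x
        by_cases hxK : x ∈ K
        swap
        · exact ⟨1, fun h => absurd h hxK⟩
        have hnIT : ¬ IsITTuple (fun (g : G) (y : X) => g • y) x := by
          intro hIT
          exact hcon x hIT (funext fun i => hxK i (Set.mem_univ i))
        unfold IsITTuple at hnIT
        push_neg at hnIT
        obtain ⟨U, hUopen, hUmem, hbad⟩ := hnIT
        have hball : ∀ i, ∃ ε : ℝ, 0 < ε ∧ Metric.ball (x i) ε ⊆ U i := fun i =>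
          Metric.isOpen_iff.mp (hUopen i) (x i) (hUmem i)
        choose εf hεf1 hεf2 using hball
        refine ⟨Finset.univ.inf' Finset.univ_nonempty εf, fun _ => ⟨?_, ?_⟩⟩
        · rw [Finset.lt_inf'_iff]
          exact fun i _ => hεf1 i
        · intro J hJinf hJ
          refine hbad J hJinf (ITaux_indepSetOn_mono_sets (fun i => ?_) hJ)
          exact (Metric.ball_subset_ball (Finset.inf'_le _ (Finset.mem_univ i))).trans (hεf2 i)
      choose εx hεx using hbadball
      -- Lebesgue-type uniformization
      have hnhds : ∀ x ∈ K, Set.pi Set.univ (fun i => Metric.ball (x i) (εx x / 2)) ∈ nhds x := by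
        intro x hxK
        refine (isOpen_set_pi Set.finite_univ
          (fun i _ => Metric.isOpen_ball)).mem_nhds ?_
        exact Set.mem_univ_pi.mpr fun i => Metric.mem_ball_self (by linarith [(hεx x hxK).1])
      obtain ⟨t, ht1, ht2⟩ := hKc.elim_nhds_subcover _ hnhds
      have htne : t.Nonempty := by
        obtain ⟨x0, hx0⟩ := hKne
        have := ht2 hx0
        simp only [Set.mem_iUnion] at this
        obtain ⟨z, hz, _⟩ := this
        exact ⟨z, hz⟩
      set δ : ℝ := t.inf' htne (fun x => εx x / 2) with hδ
      have hδpos : 0 < δ := by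
        rw [hδ, Finset.lt_inf'_iff]
        intro x hx
        linarith [(hεx x (ht1 x hx)).1]
      have hδbad : ∀ z : Fin k → X, z ∈ K → ∀ J : Set G, J.Infinite →
          ¬ IndepSetOn (fun (g : G) (y : X) => g • y) (fun i => Metric.ball (z i) δ) J := by
        intro z hzK J hJinf hJ
        have := ht2 hzK
        simp only [Set.mem_iUnion] at this
        obtain ⟨x, hxt, hzx⟩ := this
        refine (hεx x (ht1 x hxt)).2 J hJinf (ITaux_indepSetOn_mono_sets (fun i => ?_) hJ)
        intro w hw
        have h1 : dist w (z i) < δ := Metric.mem_ball.mp hw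
        have h2 : dist (z i) (x i) < εx x / 2 := Metric.mem_ball.mp (hzx i (Set.mem_univ i))
        have h3 : δ ≤ εx x / 2 := Finset.inf'_le _ hxt
        have := dist_triangle w (z i) (x i)
        exact Metric.mem_ball.mpr (by linarith)
      -- cover each fiber by finitely many δ-balls
      have hfib : ∀ i : Fin k, ∃ T : Finset X, (∀ z ∈ T, π z = y i) ∧
          π ⁻¹' {y i} ⊆ ⋃ z ∈ T, Metric.ball z δ := by
        intro i
        have hFc : IsCompact (π ⁻¹' {y i}) := (isClosed_singleton.preimage hπc).isCompact
        obtain ⟨T, hT1, hT2⟩ := hFc.elim_nhds_subcover (fun z => Metric.ball z δ)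
          (fun z _ => Metric.ball_mem_nhds z hδpos)
        exact ⟨T, fun z hz => hT1 z hz, hT2⟩
      choose T hT1 hT2 using hfib
      -- the open neighborhoods of y i
      set N : Fin k → Set X := fun i => ⋃ z ∈ T i, Metric.ball z δ with hN
      have hNopen : ∀ i, IsOpen (N i) := fun i =>
        isOpen_biUnion (fun z _ => Metric.isOpen_ball)
      set W : Fin k → Set Y := fun i => (π '' (N i)ᶜ)ᶜ with hW
      have hWopen : ∀ i, IsOpen (W i) := by
        intro i
        rw [hW]
        exact (hπc.isClosedMap _ (hNopen i).isClosed_compl).isOpen_compl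
      have hWmem : ∀ i, y i ∈ W i := by
        intro i
        simp only [hW, Set.mem_compl_iff, Set.mem_image, not_exists]
        rintro x' ⟨hx', hπx'⟩
        exact hx' (hT2 i (by simp [hπx']))
      have hWsub : ∀ i, π ⁻¹' (W i) ⊆ N i := by
        intro i x' hx'
        by_contra hn
        exact hx' (Set.mem_image_of_mem π hn)
      obtain ⟨J, hJinf, hJY⟩ := hy W hWopen hWmem
      have hJX : IndepSetOn (fun (g : G) (y : X) => g • y) (fun i => π ⁻¹' W i) J := by
        intro I hI hne φ
        obtain ⟨y₀, hy₀⟩ := hJY I hI hne φ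
        obtain ⟨x₀, hx₀⟩ := hπs y₀
        refine ⟨x₀, Set.mem_iInter₂.2 fun s hs => ?_⟩
        have hmem := Set.mem_iInter₂.1 hy₀ s hs
        simp only [Set.mem_preimage] at hmem ⊢
        rw [hπe, hx₀]
        exact hmem
      -- apply the covering lemma
      obtain ⟨B, J', hB1, _, hJ'sub, hJ'inf, hJ'⟩ :=
        ITaux_cover (fun (g : G) (y : X) => g • y)
          (fun i => (T i).image (fun z => Metric.ball z δ)) Finset.univ
          (fun i => π ⁻¹' W i) J
          (by
            intro i _
            intro x' hx'
            have := hWsub i hx'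
            simp only [hN, Set.mem_iUnion] at this
            obtain ⟨z, hz, hmem⟩ := this
            exact ⟨Metric.ball z δ, by
              simp only [Finset.coe_image, Set.mem_image, Finset.mem_coe]
              exact ⟨z, hz, rfl⟩, hmem⟩)
          hJinf hJX
      have hz : ∀ i : Fin k, ∃ z : X, z ∈ T i ∧ Metric.ball z δ = B i := by
        intro i
        have := hB1 i (Finset.mem_univ i)
        simpa [Finset.mem_image] using this
      choose z hz1 hz2 using hz
      have hzK : (fun i => z i) ∈ K := fun i _ => hT1 i (z i) (hz1 i)
      refine hδbad (fun i => z i) hzK J' hJ'inf ?_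
      have : (fun i => Metric.ball (z i) δ) = B := funext fun i => hz2 i
      rw [this]
      exact hJ'
end

section
/- Let G ↷ X be an action of a countably infinite group, let (x,y) ∈ IN_2(X,G) \ Δ_2(X), and let k ∈ ℕ. For 0 ≤ i ≤ k define μ_i = (i δ_x + (k−i) δ_y)/k ∈ 𝓜(X), where δ_x, δ_y denote the Dirac measures at x and y. Then (μ_0, μ_1, …, μ_k) ∈ IN_{k+1}(𝓜(X),G), the set of IN-tuples of length k+1 of the induced action G ↷ 𝓜(X). -/
/-! The map `X^k → 𝓜(X)`, `z ↦ (1/k) ∑ δ_{z i}`, is continuous and equivariant, and sends the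
point `z_j = (x, …, x, y, …, y)` with `j` leading copies of `x` to `μ_j`. An independence set
for neighbourhoods of `x` and `y` serves every coordinate of `X^k` separately, so
`(z_0, …, z_k)` is an IN-tuple of the diagonal action on `X^k`; IN-tuples are carried along
continuous equivariant maps. -/

open Filter Set MeasureTheory Pointwise

/-- The probability measure `(i·δ_x + (k - i)·δ_y)/k`. -/
noncomputable def mixDirac {X : Type*} [MeasurableSpace X] (x y : X) (k : ℕ) (hk : k ≠ 0)
    (i : ℕ) (hik : i ≤ k) : MeasureTheory.ProbabilityMeasure X :=
  ⟨((i : ENNReal) / k) • MeasureTheory.Measure.dirac x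
      + (((k - i : ℕ) : ENNReal) / k) • MeasureTheory.Measure.dirac y, by
    constructor
    simp only [MeasureTheory.Measure.add_apply, MeasureTheory.Measure.smul_apply,
      smul_eq_mul, MeasureTheory.measure_univ, mul_one]
    rw [ENNReal.div_add_div_same, ← Nat.cast_add, Nat.add_sub_cancel' hik]
    exact ENNReal.div_self (by exact_mod_cast hk) (by simp)⟩

open scoped ENNReal

section INTuple

variable {G X Y : Type*} [TopologicalSpace X]

theorem IsINTuple.map [TopologicalSpace Y] {a : G → X → X} {b : G → Y → Y} {π : X → Y}
    (hπ : Continuous π) (hπ_equiv : ∀ g w, π (a g w) = b g (π w)) {m : ℕ} {z : Fin m → X}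
    (hz : IsINTuple a z) : IsINTuple b (π ∘ z) := by
  intro U hU hzU n
  obtain ⟨J, hJn, hJ⟩ := hz (fun j => π ⁻¹' U j) (fun j => (hU j).preimage hπ) hzU n
  refine ⟨J, hJn, fun I hI hne φ => ?_⟩
  obtain ⟨w, hw⟩ := hJ I hI hne φ
  refine ⟨π w, mem_iInter₂.mpr fun s hs => ?_⟩
  simpa only [mem_preimage, hπ_equiv] using mem_iInter₂.mp hw s hs

theorem IsINTuple.pi_of_forall_mem_range {ι : Type*} [Finite ι] {a : G → X → X} {l m : ℕ}
    {p : Fin l → X} (hp : IsINTuple a p) {z : Fin m → ι → X} (hz : ∀ j i, z j i ∈ range p) :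
    IsINTuple (fun g (w : ι → X) i => a g (w i)) z := by
  intro U hU hzU n
  choose c hc using hz
  choose V hV hVU using fun j => isOpen_pi_iff'.mp (hU j) _ (hzU j)
  set W : Fin l → Set X := fun b => ⋂ (j) (i) (_ : c j i = b), V j i
  have hW_open (b : Fin l) : IsOpen (W b) :=
    isOpen_iInter_of_finite fun j => isOpen_iInter_of_finite fun i =>
      isOpen_iInter_of_finite fun _ => (hV j i).1
  have hpW (b : Fin l) : p b ∈ W b :=
    mem_iInter₂.mpr fun j i => mem_iInter.mpr fun h => h ▸ (hc j i).symm ▸ (hV j i).2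
  obtain ⟨J, hJn, hJ⟩ := hp W hW_open hpW n
  refine ⟨J, hJn, fun I hI hne ψ => ?_⟩
  -- independence lets each coordinate `i` follow its own pattern `s ↦ c (ψ s) i`
  have hcoord (i : ι) : ∃ w : X, ∀ s ∈ I, a s w ∈ W (c (ψ s) i) := by
    obtain ⟨w, hw⟩ := hJ I hI hne fun s => c (ψ s) i
    exact ⟨w, fun s hs => mem_iInter₂.mp hw s hs⟩
  choose w hw using hcoord
  refine ⟨w, mem_iInter₂.mpr fun s hs => hVU (ψ s) (mem_univ_pi.mpr fun i => ?_)⟩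
  exact mem_iInter.mp (mem_iInter₂.mp (hw i s hs) (ψ s) i) rfl

end INTuple

namespace MeasureTheory.ProbabilityMeasure

variable {X : Type*} [MeasurableSpace X]

noncomputable def avgDirac (k : ℕ) (hk : k ≠ 0) (z : Fin k → X) : ProbabilityMeasure X :=
  ⟨(k : ℝ≥0∞)⁻¹ • ∑ i, Measure.dirac (z i), by
    constructor
    simp only [Measure.smul_apply, Measure.finsetSum_apply, measure_univ, smul_eq_mul,
      Finset.sum_const, Finset.card_univ, Fintype.card_fin, nsmul_eq_mul, mul_one]
    exact ENNReal.inv_mul_cancel (by exact_mod_cast hk) (by simp)⟩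

theorem toMeasure_avgDirac (k : ℕ) (hk : k ≠ 0) (z : Fin k → X) :
    (avgDirac k hk z : Measure X) = (k : ℝ≥0∞)⁻¹ • ∑ i, Measure.dirac (z i) := rfl

theorem lintegral_avgDirac (k : ℕ) (hk : k ≠ 0) (z : Fin k → X) {f : X → ℝ≥0∞}
    (hf : Measurable f) :
    ∫⁻ w, f w ∂(avgDirac k hk z : Measure X) = (k : ℝ≥0∞)⁻¹ * ∑ i, f (z i) := by
  rw [toMeasure_avgDirac, lintegral_smul_measure, lintegral_finsetSum_measure, smul_eq_mul]
  simp_rw [lintegral_dirac' _ hf]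

theorem continuous_avgDirac [TopologicalSpace X] [OpensMeasurableSpace X] (k : ℕ) (hk : k ≠ 0) :
    Continuous (avgDirac (X := X) k hk) := by
  refine continuous_iff_continuousAt.mpr fun z =>
    tendsto_iff_forall_lintegral_tendsto.mpr fun f => ?_
  simp_rw [lintegral_avgDirac k hk _
    (measurable_coe_nnreal_ennreal_iff.mpr f.continuous.measurable)]
  exact ((ENNReal.continuous_const_mul (by simpa using hk)).comp
    (continuous_finsetSum _ fun i _ =>
      ENNReal.continuous_coe.comp (f.continuous.comp (continuous_apply i)))).tendsto z

theorem map_avgDirac {Y : Type*} [MeasurableSpace Y] (k : ℕ) (hk : k ≠ 0) (z : Fin k → X)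
    {f : X → Y} (hf : Measurable f)
    {hf' : AEMeasurable f (avgDirac k hk z : Measure X)} :
    (avgDirac k hk z).map hf' = avgDirac k hk (f ∘ z) := by
  apply toMeasure_injective
  rw [toMeasure_map, toMeasure_avgDirac, toMeasure_avgDirac, Measure.map_smul,
    Measure.map_finset_sum' hf.aemeasurable]
  simp_rw [Measure.map_dirac' hf]
  rfl

end MeasureTheory.ProbabilityMeasure

theorem mixDirac_eq_avgDirac {X : Type*} [MeasurableSpace X] (x y : X) (k : ℕ) (hk : k ≠ 0)
    (j : ℕ) (hj : j ≤ k) :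
    mixDirac x y k hk j hj =
      ProbabilityMeasure.avgDirac k hk fun i : Fin k => if (i : ℕ) < j then x else y := by
  apply MeasureTheory.ProbabilityMeasure.toMeasure_injective
  have hlt : (Finset.univ.filter fun i : Fin k => (i : ℕ) < j).card = j := by
    rw [Fin.card_filter_val_lt, min_eq_right hj]
  have hge : (Finset.univ.filter fun i : Fin k => ¬ (i : ℕ) < j).card = k - j := by
    rw [Finset.filter_not, Finset.card_sdiff_of_subset (Finset.filter_subset _ _), hlt,
      Finset.card_univ, Fintype.card_fin]
  rw [ProbabilityMeasure.toMeasure_avgDirac]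
  simp_rw [apply_ite Measure.dirac]
  rw [Finset.sum_ite, Finset.sum_const, Finset.sum_const, hlt, hge,
    ← Nat.cast_smul_eq_nsmul ℝ≥0∞, ← Nat.cast_smul_eq_nsmul ℝ≥0∞, smul_add, smul_smul, smul_smul,
    ← ENNReal.div_eq_inv_mul, ← ENNReal.div_eq_inv_mul]
  rfl

theorem dirac_combinations_IN_tuple_general
    {G X : Type*} [Group G]
    [TopologicalSpace X]
    [MeasurableSpace X] [BorelSpace X]
    [MulAction G X] [ContinuousConstSMul G X]
    (x y : X)
    (hIN : IsINTuple (fun (g : G) (w : X) => g • w) fun i : Fin 2 => if i = 0 then x else y)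
    (k : ℕ) (hk : k ≠ 0) :
    IsINTuple (fun (g : G) (μ : MeasureTheory.ProbabilityMeasure X) =>
        μ.map (continuous_const_smul g).measurable.aemeasurable)
      fun j : Fin (k + 1) => mixDirac x y k hk j.1 (Nat.lt_succ_iff.mp j.2) := by
  have hpatterns : IsINTuple (fun (g : G) (w : Fin k → X) i => g • w i)
      fun (j : Fin (k + 1)) (i : Fin k) => if (i : ℕ) < j then x else y :=
    hIN.pi_of_forall_mem_range fun j i => by split_ifs; exacts [⟨0, rfl⟩, ⟨1, rfl⟩]
  have hmix : (fun j : Fin (k + 1) => mixDirac x y k hk j.1 (Nat.lt_succ_iff.mp j.2)) =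
      ProbabilityMeasure.avgDirac k hk ∘
        fun (j : Fin (k + 1)) (i : Fin k) => if (i : ℕ) < j then x else y :=
    funext fun j => mixDirac_eq_avgDirac x y k hk j.1 _
  rw [hmix]
  exact hpatterns.map (ProbabilityMeasure.continuous_avgDirac k hk) fun g z =>
    (ProbabilityMeasure.map_avgDirac k hk z (continuous_const_smul g).measurable).symm

/-- If `(x,y)` is a non-diagonal IN-pair then the convex combinations
`μ_i = (i·δ_x + (k-i)·δ_y)/k`, `0 ≤ i ≤ k`, form an IN-tuple of length `k+1` of the
induced action on the space of Borel probability measures. -/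
theorem dirac_combinations_IN_tuple
    {G X : Type*} [Group G] [Countable G] [Infinite G]
    [TopologicalSpace X] [CompactSpace X] [TopologicalSpace.MetrizableSpace X] [Nonempty X]
    [MeasurableSpace X] [BorelSpace X]
    [MulAction G X] [ContinuousConstSMul G X]
    (x y : X) (hxy : x ≠ y)
    (hIN : IsINTuple (fun (g : G) (w : X) => g • w) fun i : Fin 2 => if i = 0 then x else y)
    (k : ℕ) (hk : k ≠ 0) :
    IsINTuple (fun (g : G) (μ : MeasureTheory.ProbabilityMeasure X) =>
        μ.map (continuous_const_smul g).measurable.aemeasurable)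
      fun j : Fin (k + 1) => mixDirac x y k hk j.1 (Nat.lt_succ_iff.mp j.2) :=
  dirac_combinations_IN_tuple_general x y hIN k hk
end
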